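/- The Mills ratio m of the standard normal distribution is strictly reciprocally concave on (0,∞): m is strictly convex on (0,∞) and x ↦ m(1/x) is strictly concave on (0,∞) (equivalently, x ↦ x² m′(x) is strictly decreasing on (0,∞)). -/

import Mathlib

/-!
The Mills ratio solves `m' = x m - 1`, so `m'' = (x² + 1) m - x` and
`(x² m')' = x ((x³ + 3x) m - (x² + 2))`. Convexity of `m` and the decrease of `x² m'` therefore
amount to the rational bounds `x / (x² + 1) < m(x) < (x² + 2) / (x³ + 3x)`. A candidate bound `r`
is compared with `m` through `(r - m) φ`, which tends to `0` at `∞` and has derivative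
`(r' - x r + 1) φ`; for the two rational functions `r' - x r + 1` is `2 / (x² + 1)²` and
`-6 / (x³ + 3x)²`. Finally `x ↦ m(1/x)` has derivative `-h(1/x)` with `h(x) = x² m'(x)`, so its
concavity is the decrease of `h`.
-/

open MeasureTheory Filter Set Topology

/-- The standard normal probability density function. -/
noncomputable def stdNormalPDF (t : ℝ) : ℝ := Real.exp (-t ^ 2 / 2) / Real.sqrt (2 * Real.pi)

/-- The Mills ratio of the standard normal distribution: survival function over density. -/
noncomputable def millsRatio (x : ℝ) : ℝ := (∫ t in Set.Ioi x, stdNormalPDF t) / stdNormalPDF x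

section TailIntegral

variable {E : Type*} [NormedAddCommGroup E] [NormedSpace ℝ E] {f : ℝ → E}

theorem integral_Ioi_eq_sub_intervalIntegral (hf : Integrable f) (a : ℝ) :
    ∫ t in Ioi a, f t = (∫ t in Ioi 0, f t) - ∫ t in 0..a, f t := by
  rw [← intervalIntegral.integral_Ioi_sub_Ioi' hf.integrableOn hf.integrableOn, sub_sub_cancel]

theorem hasDerivAt_integral_Ioi [CompleteSpace E] (hf : Integrable f) {x : ℝ}
    (hx : ContinuousAt f x) :
    HasDerivAt (fun a => ∫ t in Ioi a, f t) (-f x) x := by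
  rw [funext (integral_Ioi_eq_sub_intervalIntegral hf)]
  simpa using (intervalIntegral.integral_hasDerivAt_right hf.intervalIntegrable
    hf.aestronglyMeasurable.stronglyMeasurableAtFilter hx).const_sub _

theorem tendsto_integral_Ioi_atTop [CompleteSpace E] (hf : Integrable f) :
    Tendsto (fun a => ∫ t in Ioi a, f t) atTop (𝓝 0) := by
  rw [funext (integral_Ioi_eq_sub_intervalIntegral hf)]
  simpa using (intervalIntegral_tendsto_integral_Ioi 0 hf.integrableOn tendsto_id).const_sub
    (∫ t in Ioi 0, f t)

end TailIntegral

theorem StrictMonoOn.lt_of_tendsto_atTop {α β : Type*} [LinearOrder α] [NoMaxOrder α]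
    [TopologicalSpace β] [Preorder β] [OrderClosedTopology β] {f : α → β} {a : α} {L : β}
    (hf : StrictMonoOn f (Ici a)) (hL : Tendsto f atTop (𝓝 L)) : f a < L := by
  have : Nonempty α := ⟨a⟩
  obtain ⟨b, hab⟩ := exists_gt a
  refine (hf self_mem_Ici hab.le hab).trans_le (ge_of_tendsto hL ?_)
  filter_upwards [eventually_ge_atTop b] with y hy
  exact hf.monotoneOn hab.le (hab.le.trans hy) hy

theorem StrictAntiOn.strictConcaveOn_comp_one_div {f : ℝ → ℝ}
    (hf : DifferentiableOn ℝ f (Ioi 0)) (h : StrictAntiOn (fun x => x ^ 2 * deriv f x) (Ioi 0)) :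
    StrictConcaveOn ℝ (Ioi 0) (fun x => f (1 / x)) := by
  have hd x (hx : 0 < x) :
      HasDerivAt (fun x => f (1 / x)) (-((1 / x) ^ 2 * deriv f (1 / x))) x := by
    have hinv := hasDerivAt_inv hx.ne'
    simp only [← one_div] at hinv
    refine ((hf.differentiableAt (Ioi_mem_nhds (one_div_pos.mpr hx))).hasDerivAt.comp x
      hinv).congr_deriv ?_
    ring
  refine StrictAntiOn.strictConcaveOn_of_deriv (convex_Ioi 0)
    (fun x hx => (hd x hx).continuousAt.continuousWithinAt) ?_
  rw [interior_Ioi]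
  intro a ha b hb hab
  rw [(hd a ha).deriv, (hd b hb).deriv, neg_lt_neg_iff]
  exact h (mem_Ioi.mpr (one_div_pos.mpr hb)) (mem_Ioi.mpr (one_div_pos.mpr ha))
    (one_div_lt_one_div_of_lt ha hab)

theorem stdNormalPDF_pos (x : ℝ) : 0 < stdNormalPDF x := by
  unfold stdNormalPDF
  positivity

theorem continuous_stdNormalPDF : Continuous stdNormalPDF := by
  unfold stdNormalPDF
  fun_prop

theorem hasDerivAt_stdNormalPDF (x : ℝ) : HasDerivAt stdNormalPDF (-x * stdNormalPDF x) x := by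
  have h : HasDerivAt (fun t : ℝ => -t ^ 2 / 2) (-x) x :=
    ((hasDerivAt_pow 2 x).neg.div_const 2).congr_deriv (by ring)
  exact (h.exp.div_const _).congr_deriv (by simp only [stdNormalPDF]; ring)

theorem integrable_stdNormalPDF : Integrable stdNormalPDF := by
  convert (integrable_exp_neg_mul_sq (b := 1 / 2) (by norm_num)).div_const
    (Real.sqrt (2 * Real.pi)) using 2 with t
  unfold stdNormalPDF
  ring_nf

theorem tendsto_stdNormalPDF_atTop : Tendsto stdNormalPDF atTop (𝓝 0) := by
  have h : Tendsto (fun x : ℝ => -x ^ 2 / 2) atTop atBot :=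
    (tendsto_neg_atBot_iff.mpr (tendsto_pow_atTop two_ne_zero)).atBot_div_const two_pos
  unfold stdNormalPDF
  simpa using (Real.tendsto_exp_atBot.comp h).div_const (Real.sqrt (2 * Real.pi))

theorem hasDerivAt_millsRatio (x : ℝ) : HasDerivAt millsRatio (x * millsRatio x - 1) x := by
  have h := (hasDerivAt_integral_Ioi integrable_stdNormalPDF
    continuous_stdNormalPDF.continuousAt).div (hasDerivAt_stdNormalPDF x) (stdNormalPDF_pos x).ne'
  refine h.congr_deriv ?_
  have := (stdNormalPDF_pos x).ne'
  simp only [millsRatio]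
  field_simp
  ring

theorem deriv_millsRatio : deriv millsRatio = fun x => x * millsRatio x - 1 :=
  funext fun x => (hasDerivAt_millsRatio x).deriv

theorem continuous_millsRatio : Continuous millsRatio :=
  continuous_iff_continuousAt.mpr fun x => (hasDerivAt_millsRatio x).continuousAt

theorem hasDerivAt_deriv_millsRatio (x : ℝ) :
    HasDerivAt (deriv millsRatio) ((x ^ 2 + 1) * millsRatio x - x) x := by
  rw [deriv_millsRatio]
  exact (((hasDerivAt_id x).mul (hasDerivAt_millsRatio x)).sub_const 1).congr_deriv
    (by simp only [id_eq]; ring)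

theorem hasDerivAt_sub_millsRatio_mul_stdNormalPDF {r : ℝ → ℝ} {r' x : ℝ}
    (hr : HasDerivAt r r' x) :
    HasDerivAt (fun y => (r y - millsRatio y) * stdNormalPDF y)
      ((r' - x * r x + 1) * stdNormalPDF x) x :=
  ((hr.sub (hasDerivAt_millsRatio x)).mul (hasDerivAt_stdNormalPDF x)).congr_deriv
    (by simp only [Pi.sub_apply]; ring)

theorem tendsto_sub_millsRatio_mul_stdNormalPDF_atTop {r : ℝ → ℝ} {C : ℝ}
    (hr : ∀ᶠ y in atTop, |r y| ≤ C) :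
    Tendsto (fun y => (r y - millsRatio y) * stdNormalPDF y) atTop (𝓝 0) := by
  have hrφ : Tendsto (fun y => r y * stdNormalPDF y) atTop (𝓝 0) := by
    refine squeeze_zero_norm' ?_ (by simpa using tendsto_stdNormalPDF_atTop.const_mul C)
    filter_upwards [hr] with y hy
    rw [norm_mul, Real.norm_of_nonneg (stdNormalPDF_pos y).le]
    exact mul_le_mul_of_nonneg_right hy (stdNormalPDF_pos y).le
  have hm : ∀ y, millsRatio y * stdNormalPDF y = ∫ t in Ioi y, stdNormalPDF t :=
    fun y => div_mul_cancel₀ _ (stdNormalPDF_pos y).ne'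
  simpa [sub_mul, hm] using hrφ.sub (tendsto_integral_Ioi_atTop integrable_stdNormalPDF)

theorem lt_millsRatio_of_hasDerivAt {r r' : ℝ → ℝ} {x C : ℝ}
    (hr : ∀ y ≥ x, HasDerivAt r (r' y) y) (hr' : ∀ y ≥ x, y * r y - 1 < r' y)
    (hbdd : ∀ᶠ y in atTop, |r y| ≤ C) : r x < millsRatio x := by
  have hd y (hy : y ≥ x) := hasDerivAt_sub_millsRatio_mul_stdNormalPDF (hr y hy)
  have hmono : StrictMonoOn (fun y => (r y - millsRatio y) * stdNormalPDF y) (Ici x) := by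
    refine strictMonoOn_of_hasDerivWithinAt_pos (convex_Ici x)
      (fun y hy => (hd y hy).continuousAt.continuousWithinAt)
      (fun y hy => (hd y (interior_subset hy)).hasDerivWithinAt) fun y hy => ?_
    have := hr' y (interior_subset hy)
    exact mul_pos (by linarith) (stdNormalPDF_pos y)
  have := hmono.lt_of_tendsto_atTop (tendsto_sub_millsRatio_mul_stdNormalPDF_atTop hbdd)
  nlinarith [stdNormalPDF_pos x]

theorem millsRatio_lt_of_hasDerivAt {r r' : ℝ → ℝ} {x C : ℝ}
    (hr : ∀ y ≥ x, HasDerivAt r (r' y) y) (hr' : ∀ y ≥ x, r' y < y * r y - 1)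
    (hbdd : ∀ᶠ y in atTop, |r y| ≤ C) : millsRatio x < r x := by
  have hd y (hy : y ≥ x) := (hasDerivAt_sub_millsRatio_mul_stdNormalPDF (hr y hy)).neg
  have hmono : StrictMonoOn (fun y => -((r y - millsRatio y) * stdNormalPDF y)) (Ici x) := by
    refine strictMonoOn_of_hasDerivWithinAt_pos (convex_Ici x)
      (fun y hy => (hd y hy).continuousAt.continuousWithinAt)
      (fun y hy => (hd y (interior_subset hy)).hasDerivWithinAt) fun y hy => ?_
    have := hr' y (interior_subset hy)
    exact neg_pos.mpr (mul_neg_of_neg_of_pos (by linarith) (stdNormalPDF_pos y))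
  have := hmono.lt_of_tendsto_atTop
    (by simpa using (tendsto_sub_millsRatio_mul_stdNormalPDF_atTop hbdd).neg)
  nlinarith [stdNormalPDF_pos x]

theorem div_sq_add_one_lt_millsRatio (x : ℝ) : x / (x ^ 2 + 1) < millsRatio x := by
  refine lt_millsRatio_of_hasDerivAt (r := fun y => y / (y ^ 2 + 1))
    (r' := fun y => (1 - y ^ 2) / (y ^ 2 + 1) ^ 2) (C := 1)
    (fun y _ => ?_) (fun y _ => ?_) (Eventually.of_forall fun y => ?_)
  · exact ((hasDerivAt_id y).div ((hasDerivAt_pow 2 y).add_const 1) (by positivity)).congr_deriv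
      (by simp only [id_eq]; ring)
  · have key : (1 - y ^ 2) / (y ^ 2 + 1) ^ 2 - (y * (y / (y ^ 2 + 1)) - 1)
        = 2 / (y ^ 2 + 1) ^ 2 := by
      field_simp
      ring
    have : 0 < 2 / (y ^ 2 + 1) ^ 2 := by positivity
    linarith
  · rw [abs_div, abs_of_pos (by positivity : (0 : ℝ) < y ^ 2 + 1), div_le_one (by positivity)]
    nlinarith [sq_abs y, sq_nonneg (|y| - 1)]

theorem millsRatio_lt_sq_add_two_div {x : ℝ} (hx : 0 < x) :
    millsRatio x < (x ^ 2 + 2) / (x ^ 3 + 3 * x) := by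
  refine millsRatio_lt_of_hasDerivAt (r := fun y => (y ^ 2 + 2) / (y ^ 3 + 3 * y))
    (r' := fun y => -(y ^ 4 + 3 * y ^ 2 + 6) / (y ^ 3 + 3 * y) ^ 2) (C := 1)
    (fun y hy => ?_) (fun y hy => ?_) ?_
  · have : 0 < y ^ 3 + 3 * y := by have := hx.trans_le hy; positivity
    exact (((hasDerivAt_pow 2 y).add_const 2).div
      ((hasDerivAt_pow 3 y).add ((hasDerivAt_id y).const_mul 3)) this.ne').congr_deriv
      (by simp only [Pi.add_apply, id_eq]; ring)
  · have hy0 : 0 < y := hx.trans_le hy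
    have : 0 < y ^ 3 + 3 * y := by positivity
    have key : y * ((y ^ 2 + 2) / (y ^ 3 + 3 * y)) - 1
        - -(y ^ 4 + 3 * y ^ 2 + 6) / (y ^ 3 + 3 * y) ^ 2 = 6 / (y ^ 3 + 3 * y) ^ 2 := by
      field_simp
      ring
    have : 0 < 6 / (y ^ 3 + 3 * y) ^ 2 := by positivity
    linarith
  · filter_upwards [eventually_ge_atTop 1] with y hy
    rw [abs_of_pos (by positivity), div_le_one (by positivity)]
    nlinarith

theorem strictConvexOn_millsRatio : StrictConvexOn ℝ univ millsRatio := by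
  refine strictConvexOn_univ_of_deriv2_pos continuous_millsRatio fun x => ?_
  rw [Function.iterate_succ_apply, Function.iterate_one, (hasDerivAt_deriv_millsRatio x).deriv,
    sub_pos, ← div_lt_iff₀' (by positivity)]
  exact div_sq_add_one_lt_millsRatio x

theorem strictAntiOn_sq_mul_deriv_millsRatio :
    StrictAntiOn (fun x : ℝ => x ^ 2 * deriv millsRatio x) (Ioi 0) := by
  have hd x : HasDerivAt (fun x : ℝ => x ^ 2 * deriv millsRatio x)
      (x * ((x ^ 3 + 3 * x) * millsRatio x - (x ^ 2 + 2))) x :=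
    ((hasDerivAt_pow 2 x).mul (hasDerivAt_deriv_millsRatio x)).congr_deriv
      (by rw [deriv_millsRatio]; ring)
  refine strictAntiOn_of_hasDerivWithinAt_neg (convex_Ioi 0)
    (fun x _ => (hd x).continuousAt.continuousWithinAt) (fun x _ => (hd x).hasDerivWithinAt)
    fun x hx => ?_
  rw [interior_Ioi, mem_Ioi] at hx
  have := millsRatio_lt_sq_add_two_div hx
  rw [lt_div_iff₀ (by positivity), mul_comm] at this
  exact mul_neg_of_pos_of_neg hx (sub_neg.mpr this)

/-- The Mills ratio `m` of the standard normal distribution is strictly reciprocally concave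
on `(0,∞)`: `m` is strictly convex on `(0,∞)` and `x ↦ m(1/x)` is strictly concave on
`(0,∞)` (equivalently, `x ↦ x² m′(x)` is strictly decreasing on `(0,∞)`). -/
theorem millsRatio_strictly_reciprocally_concave :
    StrictConvexOn ℝ (Set.Ioi 0) millsRatio ∧
      StrictConcaveOn ℝ (Set.Ioi 0) (fun x : ℝ => millsRatio (1 / x)) ∧
      StrictAntiOn (fun x : ℝ => x ^ 2 * deriv millsRatio x) (Set.Ioi 0) :=
  ⟨strictConvexOn_millsRatio.subset (subset_univ _) (convex_Ioi 0),
    strictAntiOn_sq_mul_deriv_millsRatio.strictConcaveOn_comp_one_div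
      fun x _ => (hasDerivAt_millsRatio x).differentiableAt.differentiableWithinAt,
    strictAntiOn_sq_mul_deriv_millsRatio⟩
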